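/- (Interpolation property of the projection.) Fix s ≥ 1 and distinct ζ₀, …, ζ_{s−1} ∈ 𝕋, let f ∈ D_μ, let n ≥ s, and let P_n f be the orthogonal projection of f onto the polynomials of degree at most n in D_μ. Then for every 0 ≤ ℓ ≤ s − 1, (P_n f)(ζ_ℓ) = f(ζ_ℓ) = ∑_{k=0}^∞ f̂(k) ζ_ℓ^k. -/

import Mathlib

/-!
Both claims are read off from the decomposition `f = A + q g` with `A` of degree `< s`.

At the nodes the `D_μ` inner product only sees boundary values, so the Lagrange basis polynomial
`L_ℓ` (of degree `s - 1 ≤ n`) satisfies `⟨h, L_ℓ⟩ = h(ζ_ℓ)`. Orthogonality of `f - P` to `L_ℓ`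
thus gives `P(ζ_ℓ) = f(ζ_ℓ)`.

For the Taylor series, the partial sums of `A` are eventually `A(ζ_ℓ) = f(ζ_ℓ)`. Writing
`q = (X - ζ_ℓ) q'`, the partial sums of `(X - ζ_ℓ) h` at `ζ_ℓ` telescope to `-ĥ(N) ζ_ℓ^(N+1)`,
and `ĥ(N) ζ_ℓ^N → 0` for `h = q' g` because `ĝ(N) → 0` and `|ζ_ℓ| = 1`.
-/

open Polynomial Filter Metric Topology
open scoped NNReal

noncomputable section

/-- `RepDmu s ζ f a gh` : on `𝔻`, `f = ∑_{j<s} a_j z^j + q(z) g(z)` where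
`q(z) = ∏ (z - ζ_k)` and `g ∈ H²` has Taylor coefficients `gh`. -/
def RepDmu (s : ℕ) (ζ : Fin s → ℂ) (f : ℂ → ℂ) (a : Fin s → ℂ) (gh : ℕ → ℂ) : Prop :=
  Summable (fun n => ‖gh n‖ ^ 2) ∧
    ∀ z ∈ Metric.ball (0 : ℂ) 1,
      f z = (∑ j : Fin s, a j * z ^ (j : ℕ)) + (∏ k, (z - ζ k)) * ∑' n, gh n * z ^ n

/-- The `D_μ` inner product of the elements represented by `(b, hh)` and `(c, kk)`. -/
def DinnerDmu (s : ℕ) (ζ : Fin s → ℂ) (b : Fin s → ℂ) (hh : ℕ → ℂ)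
    (c : Fin s → ℂ) (kk : ℕ → ℂ) : ℂ :=
  (∑ k : Fin s, (∑ j : Fin s, b j * ζ k ^ (j : ℕ)) *
      (starRingEnd ℂ) (∑ j : Fin s, c j * ζ k ^ (j : ℕ))) +
    ∑' n, hh n * (starRingEnd ℂ) (kk n)

namespace Polynomial

variable {R : Type*}

theorem eval_eq_sum_fin [Semiring R] {p : R[X]} {s : ℕ} (hp : p.natDegree < s) (z : R) :
    p.eval z = ∑ j : Fin s, p.coeff j * z ^ (j : ℕ) := by
  rw [eval_eq_sum_range' hp, Finset.sum_range]

theorem hasSum_coeff_mul_pow [Semiring R] [TopologicalSpace R] (p : R[X]) (z : R) :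
    HasSum (fun n => p.coeff n * z ^ n) (p.eval z) := by
  rw [eval_eq_sum_range]
  exact hasSum_sum_of_ne_finset_zero fun n hn => by
    rw [coeff_eq_zero_of_natDegree_lt (by simpa using hn), zero_mul]

theorem summable_norm_coeff_mul_pow [SeminormedRing R] (p : R[X]) (z : R) :
    Summable fun n => ‖p.coeff n * z ^ n‖ :=
  summable_of_ne_finset_zero (s := Finset.range (p.natDegree + 1)) fun n hn => by
    rw [coeff_eq_zero_of_natDegree_lt (by simpa using hn), zero_mul, norm_zero]

end Polynomial

namespace PowerSeries

variable {R : Type*}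

theorem sum_range_coeff_X_sub_C_mul_mul_pow [CommRing R] (φ : R⟦X⟧) (ζ : R) (N : ℕ) :
    ∑ k ∈ Finset.range (N + 1), coeff k ((X - C ζ) * φ) * ζ ^ k = -(coeff N φ * ζ ^ (N + 1)) := by
  induction N with
  | zero => simp [mul_comm]
  | succ N ih =>
    rw [Finset.sum_range_succ, ih, sub_mul, map_sub, coeff_succ_X_mul, coeff_C_mul]
    ring

variable [NormedCommRing R]

theorem tendsto_coeff_polynomial_mul_mul_pow {ζ : R} {φ : R⟦X⟧}
    (hφ : Tendsto (fun n => coeff n φ * ζ ^ n) atTop (𝓝 0)) (p : R[X]) :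
    Tendsto (fun n => coeff n ((p : R⟦X⟧) * φ) * ζ ^ n) atTop (𝓝 0) := by
  induction p using Polynomial.induction_on' with
  | add p q hp hq => simpa [add_mul] using hp.add hq
  | monomial d a =>
    have hshift := (hφ.comp (tendsto_sub_atTop_nat d)).const_mul (a * ζ ^ d)
    rw [mul_zero] at hshift
    refine hshift.congr' ?_
    filter_upwards [eventually_ge_atTop d] with n hn
    rw [← Polynomial.C_mul_X_pow_eq_monomial, Polynomial.coe_mul, Polynomial.coe_C,
      Polynomial.coe_pow, Polynomial.coe_X, mul_assoc (C a), coeff_C_mul, coeff_X_pow_mul',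
      if_pos hn, Function.comp_apply, ← pow_sub_mul_pow ζ hn]
    ring

theorem tendsto_sum_range_coeff_polynomial_mul_mul_pow {ζ : R} {φ : R⟦X⟧}
    (hφ : Tendsto (fun n => coeff n φ * ζ ^ n) atTop (𝓝 0)) {p : R[X]} (hp : p.IsRoot ζ) :
    Tendsto (fun N => ∑ k ∈ Finset.range N, coeff k ((p : R⟦X⟧) * φ) * ζ ^ k) atTop (𝓝 0) := by
  rw [← Polynomial.mul_divByMonic_eq_iff_isRoot.mpr hp, Polynomial.coe_mul, mul_assoc,
    ← tendsto_add_atTop_iff_nat 1]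
  simp only [Polynomial.coe_sub, Polynomial.coe_X, Polynomial.coe_C,
    sum_range_coeff_X_sub_C_mul_mul_pow]
  simpa [pow_succ, mul_assoc] using ((tendsto_coeff_polynomial_mul_mul_pow hφ _).mul_const ζ).neg

theorem hasSum_coeff_mul_mul_pow [CompleteSpace R] {φ ψ : R⟦X⟧} {z : R}
    (hφ : Summable fun n => ‖coeff n φ * z ^ n‖) (hψ : Summable fun n => ‖coeff n ψ * z ^ n‖) :
    HasSum (fun n => coeff n (φ * ψ) * z ^ n)
      ((∑' n, coeff n φ * z ^ n) * ∑' n, coeff n ψ * z ^ n) := by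
  have hterm : ∀ n, coeff n (φ * ψ) * z ^ n =
      ∑ p ∈ Finset.HasAntidiagonal.antidiagonal n,
        coeff p.1 φ * z ^ p.1 * (coeff p.2 ψ * z ^ p.2) := by
    intro n
    rw [coeff_mul, Finset.sum_mul]
    refine Finset.sum_congr rfl fun p hp => ?_
    rw [← Finset.HasAntidiagonal.mem_antidiagonal.mp hp, pow_add]
    ring
  simp only [hterm]
  rw [tsum_mul_tsum_eq_tsum_sum_antidiagonal_of_summable_norm hφ hψ]
  exact (summable_norm_sum_mul_antidiagonal_of_summable_norm hφ hψ).of_norm.hasSum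

end PowerSeries

theorem hasFPowerSeriesOnBall_ofScalars_of_hasSum {c : ℕ → ℂ} {f : ℂ → ℂ} {r : ℝ≥0}
    (hr : 0 < r) (hf : ∀ z ∈ ball (0 : ℂ) r, HasSum (fun n => c n * z ^ n) (f z)) :
    HasFPowerSeriesOnBall f (FormalMultilinearSeries.ofScalars ℂ c) 0 r where
  r_le := by
    refine le_of_forall_lt_imp_le_of_dense fun ρ hρ => ?_
    lift ρ to ℝ≥0 using (hρ.trans ENNReal.coe_lt_top).ne
    refine FormalMultilinearSeries.le_radius_of_summable _ ?_
    have hmem : (ρ : ℂ) ∈ ball (0 : ℂ) r := by simpa using hρ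
    simpa [FormalMultilinearSeries.ofScalars_norm] using (hf _ hmem).summable.norm
  r_pos := by simpa using hr
  hasSum {z} hz := by
    simpa [FormalMultilinearSeries.ofScalars_apply_eq, mul_comm] using hf z (by simpa using hz)

theorem eq_of_hasSum_pow_of_ball {c d : ℕ → ℂ} {f : ℂ → ℂ} {r : ℝ≥0} (hr : 0 < r)
    (hc : ∀ z ∈ ball (0 : ℂ) r, HasSum (fun n => c n * z ^ n) (f z))
    (hd : ∀ z ∈ ball (0 : ℂ) r, HasSum (fun n => d n * z ^ n) (f z)) : c = d :=
  FormalMultilinearSeries.ofScalars_series_injective ℂ ℂ <|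
    (hasFPowerSeriesOnBall_ofScalars_of_hasSum hr hc).hasFPowerSeriesAt.eq_formalMultilinearSeries
      (hasFPowerSeriesOnBall_ofScalars_of_hasSum hr hd).hasFPowerSeriesAt

theorem tendsto_zero_of_summable_norm_sq {g : ℕ → ℂ} (hg : Summable fun n => ‖g n‖ ^ 2) :
    Tendsto g atTop (𝓝 0) := by
  rw [tendsto_zero_iff_norm_tendsto_zero]
  simpa using hg.tendsto_atTop_zero.sqrt

theorem summable_norm_mul_pow_of_summable_sq {g : ℕ → ℂ} (hg : Summable fun n => ‖g n‖ ^ 2)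
    {z : ℂ} (hz : ‖z‖ < 1) : Summable fun n => ‖g n * z ^ n‖ :=
  summable_norm_mul_geometric_of_norm_lt_one' (k := 0) hz
    (by simpa using (tendsto_zero_of_summable_norm_sq hg).isBigO_one ℂ)

open Lagrange

section Dmu

variable {s : ℕ} {ζ : Fin s → ℂ}

theorem natDegree_modByMonic_nodal_lt (hs : 0 < s) (P : ℂ[X]) :
    (P %ₘ nodal Finset.univ ζ).natDegree < s := by
  have hq1 : nodal Finset.univ ζ ≠ 1 := fun h1 => by
    simpa [natDegree_nodal, hs.ne'] using congrArg natDegree h1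
  simpa [natDegree_nodal] using natDegree_modByMonic_lt P nodal_monic hq1

theorem natDegree_basis_lt (hinj : Function.Injective ζ) (ℓ : Fin s) :
    (Lagrange.basis Finset.univ ζ ℓ).natDegree < s := by
  rw [natDegree_basis hinj.injOn (Finset.mem_univ ℓ), Finset.card_univ, Fintype.card_fin]
  exact Nat.sub_lt ℓ.pos one_pos

theorem repDmu_eval_of_natDegree_lt {p : ℂ[X]} (hp : p.natDegree < s) :
    RepDmu s ζ (fun z => p.eval z) (fun j => p.coeff j) 0 :=
  ⟨by simp, fun z _ => by simp [eval_eq_sum_fin hp]⟩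

theorem RepDmu.sub_eval {f : ℂ → ℂ} {a : Fin s → ℂ} {gh : ℕ → ℂ} (h : RepDmu s ζ f a gh)
    (hs : 0 < s) (P : ℂ[X]) :
    RepDmu s ζ (fun z => f z - P.eval z) (fun j => a j - (P %ₘ nodal Finset.univ ζ).coeff j)
      (fun m => gh m - (P /ₘ nodal Finset.univ ζ).coeff m) := by
  obtain ⟨hsq, hf⟩ := h
  set q := nodal Finset.univ ζ
  refine ⟨hsq.congr_atTop ?_, fun z hz => ?_⟩
  · filter_upwards [eventually_gt_atTop (P /ₘ q).natDegree] with m hm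
    rw [coeff_eq_zero_of_natDegree_lt hm, sub_zero]
  · have hG : HasSum (fun m => (gh m - (P /ₘ q).coeff m) * z ^ m)
        ((∑' m, gh m * z ^ m) - (P /ₘ q).eval z) := by
      simpa only [sub_mul] using
        (summable_norm_mul_pow_of_summable_sq hsq (by simpa using hz)).of_norm.hasSum.sub
          ((P /ₘ q).hasSum_coeff_mul_pow z)
    have hP : P.eval z = (P %ₘ q).eval z + q.eval z * (P /ₘ q).eval z := by
      rw [← eval_mul, ← eval_add, modByMonic_add_div]
    dsimp only
    rw [hG.tsum_eq, hf z hz, hP, eval_eq_sum_fin (natDegree_modByMonic_nodal_lt hs P), eval_nodal]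
    simp only [sub_mul, Finset.sum_sub_distrib]
    ring

theorem dinnerDmu_basis (hinj : Function.Injective ζ) (b : Fin s → ℂ) (hh : ℕ → ℂ) (ℓ : Fin s) :
    DinnerDmu s ζ b hh (fun j => (Lagrange.basis Finset.univ ζ ℓ).coeff j) 0 =
      ∑ j, b j * ζ ℓ ^ (j : ℕ) := by
  simp only [DinnerDmu, Pi.zero_apply, map_zero, mul_zero, tsum_zero, add_zero,
    ← eval_eq_sum_fin (natDegree_basis_lt hinj ℓ)]
  rw [Finset.sum_eq_single ℓ (fun k _ hk => by rw [eval_basis_of_ne hk.symm (Finset.mem_univ k),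
    map_zero, mul_zero]) (by simp), eval_basis_self hinj.injOn (Finset.mem_univ ℓ), map_one,
    mul_one]

theorem RepDmu.tendsto_sum_range_mul_pow {f : ℂ → ℂ} {a : Fin s → ℂ} {gh : ℕ → ℂ}
    (h : RepDmu s ζ f a gh) {fh : ℕ → ℂ}
    (hfh : ∀ z ∈ ball (0 : ℂ) 1, HasSum (fun n => fh n * z ^ n) (f z)) {ℓ : Fin s}
    (hℓ : ‖ζ ℓ‖ ≤ 1) :
    Tendsto (fun N => ∑ k ∈ Finset.range N, fh k * ζ ℓ ^ k) atTop
      (𝓝 (∑ j : Fin s, a j * ζ ℓ ^ (j : ℕ))) := by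
  obtain ⟨hsq, hf⟩ := h
  set A : ℂ[X] := ∑ j : Fin s, C (a j) * X ^ (j : ℕ)
  have hA : ∀ z, A.eval z = ∑ j : Fin s, a j * z ^ (j : ℕ) := fun z => by
    simp [A, eval_finsetSum]
  set Φ : PowerSeries ℂ := A + nodal Finset.univ ζ * PowerSeries.mk gh
  have hΦ : ∀ z ∈ ball (0 : ℂ) 1, HasSum (fun n => PowerSeries.coeff n Φ * z ^ n) (f z) := by
    intro z hz
    have hprod := PowerSeries.hasSum_coeff_mul_mul_pow
      (φ := (nodal Finset.univ ζ : PowerSeries ℂ)) (ψ := PowerSeries.mk gh) (z := z)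
      (by simpa only [Polynomial.coeff_coe] using
        (nodal Finset.univ ζ).summable_norm_coeff_mul_pow z)
      (by simpa only [PowerSeries.coeff_mk] using
        summable_norm_mul_pow_of_summable_sq hsq (by simpa using hz))
    simp only [PowerSeries.coeff_mk] at hprod
    simpa [Φ, add_mul, hf z hz, hA, eval_nodal,
      ((nodal Finset.univ ζ).hasSum_coeff_mul_pow z).tsum_eq]
      using (A.hasSum_coeff_mul_pow z).add hprod
  obtain rfl : fh = fun n => PowerSeries.coeff n Φ := eq_of_hasSum_pow_of_ball one_pos hfh hΦ
  have hvanish :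
      Tendsto (fun n => PowerSeries.coeff n (PowerSeries.mk gh) * ζ ℓ ^ n) atTop (𝓝 0) := by
    refine squeeze_zero_norm (fun n => ?_)
      ((tendsto_zero_of_summable_norm_sq hsq).norm.trans (by simp))
    simpa [norm_mul, norm_pow] using
      mul_le_of_le_one_right (norm_nonneg (gh n)) (pow_le_one₀ (norm_nonneg _) hℓ)
  simpa [Φ, add_mul, Finset.sum_add_distrib, hA] using
    (A.hasSum_coeff_mul_pow (ζ ℓ)).tendsto_sum_nat.add
      (PowerSeries.tendsto_sum_range_coeff_polynomial_mul_mul_pow hvanish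
        (eval_nodal_at_node (Finset.mem_univ ℓ)))

end Dmu

theorem projection_interpolates_boundary_values_general
    (s : ℕ) (ζ : Fin s → ℂ)
    (hζ : ∀ k, ‖ζ k‖ = 1) (hinj : Function.Injective ζ)
    (f : ℂ → ℂ) (a : Fin s → ℂ) (gh : ℕ → ℂ) (hrep : RepDmu s ζ f a gh)
    (fh : ℕ → ℂ)
    (hfh : ∀ z ∈ Metric.ball (0 : ℂ) 1, HasSum (fun n => fh n * z ^ n) (f z))
    (n : ℕ) (hn : s ≤ n)
    (P : Polynomial ℂ)
    (horth : ∀ p : Polynomial ℂ, p.degree ≤ (n : WithBot ℕ) →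
      ∀ (b : Fin s → ℂ) (hh : ℕ → ℂ) (cc : Fin s → ℂ) (kk : ℕ → ℂ),
        RepDmu s ζ (fun z => f z - P.eval z) b hh →
        RepDmu s ζ (fun z => p.eval z) cc kk →
        DinnerDmu s ζ b hh cc kk = 0) :
    ∀ ℓ : Fin s,
      P.eval (ζ ℓ) = (∑ j : Fin s, a j * ζ ℓ ^ (j : ℕ)) ∧
      Tendsto (fun N => ∑ k ∈ Finset.range N, fh k * ζ ℓ ^ k) atTop
        (𝓝 (∑ j : Fin s, a j * ζ ℓ ^ (j : ℕ))) := by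
  intro ℓ
  refine ⟨?_, hrep.tendsto_sum_range_mul_pow hfh (hζ ℓ).le⟩
  have hL := natDegree_basis_lt hinj ℓ
  have hboundary := horth _ (degree_le_natDegree.trans (by exact_mod_cast (hL.trans_le hn).le))
    _ _ _ _ (hrep.sub_eval ℓ.pos P) (repDmu_eval_of_natDegree_lt hL)
  rw [dinnerDmu_basis hinj] at hboundary
  simp only [sub_mul, Finset.sum_sub_distrib, sub_eq_zero] at hboundary
  rw [hboundary, ← eval_eq_sum_fin (natDegree_modByMonic_nodal_lt ℓ.pos P),
    modByMonic_eq_sub_mul_div P (nodal Finset.univ ζ), eval_sub, eval_mul,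
    eval_nodal_at_node (Finset.mem_univ ℓ), zero_mul, sub_zero]

/-- **Interpolation property of the projection.** For `f ∈ D_μ`,
`n ≥ s`, and `P` the orthogonal projection of `f` onto the polynomials of degree at
most `n` (characterized by `deg P ≤ n` and `f - P` being `D_μ`-orthogonal to all
polynomials of degree `≤ n`), one has, for every `0 ≤ ℓ ≤ s-1`,
`P(ζ_ℓ) = f(ζ_ℓ) = ∑_{k=0}^∞ fh(k) ζ_ℓ^k`. -/
theorem projection_interpolates_boundary_values
    (s : ℕ) (hs : 1 ≤ s) (ζ : Fin s → ℂ)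
    (hζ : ∀ k, ‖ζ k‖ = 1) (hinj : Function.Injective ζ)
    (f : ℂ → ℂ) (a : Fin s → ℂ) (gh : ℕ → ℂ) (hrep : RepDmu s ζ f a gh)
    (fh : ℕ → ℂ)
    (hfh : ∀ z ∈ Metric.ball (0 : ℂ) 1, HasSum (fun n => fh n * z ^ n) (f z))
    (n : ℕ) (hn : s ≤ n)
    (P : Polynomial ℂ) (hdeg : P.degree ≤ (n : WithBot ℕ))
    (horth : ∀ p : Polynomial ℂ, p.degree ≤ (n : WithBot ℕ) →
      ∀ (b : Fin s → ℂ) (hh : ℕ → ℂ) (cc : Fin s → ℂ) (kk : ℕ → ℂ),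
        RepDmu s ζ (fun z => f z - P.eval z) b hh →
        RepDmu s ζ (fun z => p.eval z) cc kk →
        DinnerDmu s ζ b hh cc kk = 0) :
    ∀ ℓ : Fin s,
      P.eval (ζ ℓ) = (∑ j : Fin s, a j * ζ ℓ ^ (j : ℕ)) ∧
      Tendsto (fun N => ∑ k ∈ Finset.range N, fh k * ζ ℓ ^ k) atTop
        (𝓝 (∑ j : Fin s, a j * ζ ℓ ^ (j : ℕ))) :=
  projection_interpolates_boundary_values_general s ζ hζ hinj f a gh hrep fh hfh n hn P horth
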